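/- (Locality) Let D be a family of dependencies and φ(x̄) a formula of FO(D) with free variables among x̄. Then for all models M and all teams X whose domain contains x̄, M ⊨_X φ(x̄) if and only if M ⊨_{X↾x̄} φ(x̄), where X↾x̄ is the team obtained by restricting all assignments in X to the variables x̄. -/

import Mathlib

/-- Formulas of first-order logic with team semantics, in negation normal form,
over a relational signature `σ` (with arities `ar`) extended with dependency
atoms indexed by `δ` (with arities `dar`).  Equality and inequality literals
are between tuples of variables; variables are natural numbers. -/
inductive TForm (σ : Type) (ar : σ → ℕ) (δ : Type) (dar : δ → ℕ) : Type
  | rel (r : σ) (ts : Fin (ar r) → ℕ)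
  | nrel (r : σ) (ts : Fin (ar r) → ℕ)
  | eq (k : ℕ) (x y : Fin k → ℕ)
  | neq (k : ℕ) (x y : Fin k → ℕ)
  | dep (d : δ) (xs : Fin (dar d) → ℕ)
  | and (φ ψ : TForm σ ar δ dar)
  | or (φ ψ : TForm σ ar δ dar)
  | ex (v : ℕ) (φ : TForm σ ar δ dar)
  | all (v : ℕ) (φ : TForm σ ar δ dar)

/-- A team over a model with carrier `M`: a set of assignments. -/
abbrev Team (M : Type) := Set (ℕ → M)

/-- `X(x̄)`: the relation of values of the tuple `x̄` in the team `X`. -/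
def Team.rel {M : Type} (X : Team M) {k : ℕ} (xs : Fin k → ℕ) : Set (Fin k → M) :=
  {t | ∃ s ∈ X, t = fun i => s (xs i)}

/-- An interpretation of a family of dependencies: for each index, an
isomorphism-invariant-style class of pairs (carrier, relation). -/
abbrev DepFam (δ : Type) (dar : δ → ℕ) := ∀ d : δ, ∀ M : Type, Set (Fin (dar d) → M) → Prop

/-- Lax team semantics. -/
def tsat {σ : Type} {ar : σ → ℕ} {δ : Type} {dar : δ → ℕ} {M : Type}
    (RI : ∀ r : σ, Set (Fin (ar r) → M)) (DI : DepFam δ dar) :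
    TForm σ ar δ dar → Team M → Prop
  | .rel r ts, X => ∀ s ∈ X, (fun i => s (ts i)) ∈ RI r
  | .nrel r ts, X => ∀ s ∈ X, (fun i => s (ts i)) ∉ RI r
  | .eq _ x y, X => ∀ s ∈ X, (fun i => s (x i)) = fun i => s (y i)
  | .neq _ x y, X => ∀ s ∈ X, (fun i => s (x i)) ≠ fun i => s (y i)
  | .dep d xs, X => DI d M (X.rel xs)
  | .and φ ψ, X => tsat RI DI φ X ∧ tsat RI DI ψ X
  | .or φ ψ, X => ∃ Y Z, X = Y ∪ Z ∧ tsat RI DI φ Y ∧ tsat RI DI ψ Z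
  | .ex v φ, X => ∃ H : (ℕ → M) → Set M, (∀ s ∈ X, (H s).Nonempty) ∧
      tsat RI DI φ {s' | ∃ s ∈ X, ∃ m ∈ H s, s' = Function.update s v m}
  | .all v φ, X => tsat RI DI φ {s' | ∃ s ∈ X, ∃ m : M, s' = Function.update s v m}

/-- Tarski (single-assignment) semantics; dependency atoms are treated as
trivially true (they are only meaningful for first-order formulas). -/
def ssat {σ : Type} {ar : σ → ℕ} {δ : Type} {dar : δ → ℕ} {M : Type}
    (RI : ∀ r : σ, Set (Fin (ar r) → M)) :
    TForm σ ar δ dar → (ℕ → M) → Prop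
  | .rel r ts, s => (fun i => s (ts i)) ∈ RI r
  | .nrel r ts, s => (fun i => s (ts i)) ∉ RI r
  | .eq _ x y, s => (fun i => s (x i)) = fun i => s (y i)
  | .neq _ x y, s => (fun i => s (x i)) ≠ fun i => s (y i)
  | .dep _ _, _ => True
  | .and φ ψ, s => ssat RI φ s ∧ ssat RI ψ s
  | .or φ ψ, s => ssat RI φ s ∨ ssat RI ψ s
  | .ex v φ, s => ∃ m : M, ssat RI φ (Function.update s v m)
  | .all v φ, s => ∀ m : M, ssat RI φ (Function.update s v m)

/-- A formula is first-order if it contains no dependency atoms. -/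
def TForm.isFO {σ : Type} {ar : σ → ℕ} {δ : Type} {dar : δ → ℕ} :
    TForm σ ar δ dar → Prop
  | .dep _ _ => False
  | .and φ ψ => φ.isFO ∧ ψ.isFO
  | .or φ ψ => φ.isFO ∧ ψ.isFO
  | .ex _ φ => φ.isFO
  | .all _ φ => φ.isFO
  | _ => True

/-- Free variables of a formula. -/
def TForm.free {σ : Type} {ar : σ → ℕ} {δ : Type} {dar : δ → ℕ} :
    TForm σ ar δ dar → Set ℕ
  | .rel _ ts => Set.range ts
  | .nrel _ ts => Set.range ts
  | .eq _ x y => Set.range x ∪ Set.range y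
  | .neq _ x y => Set.range x ∪ Set.range y
  | .dep _ xs => Set.range xs
  | .and φ ψ => φ.free ∪ ψ.free
  | .or φ ψ => φ.free ∪ ψ.free
  | .ex v φ => φ.free \ {v}
  | .all v φ => φ.free \ {v}

/-- The flattening `φᶠ`: replace every dependency atom by the trivially true
atom `⊤` (here rendered as the empty-tuple equality). -/
def TForm.flatten {σ : Type} {ar : σ → ℕ} {δ : Type} {dar : δ → ℕ} :
    TForm σ ar δ dar → TForm σ ar δ dar
  | .dep _ _ => .eq 0 Fin.elim0 Fin.elim0
  | .and φ ψ => .and φ.flatten ψ.flatten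
  | .or φ ψ => .or φ.flatten ψ.flatten
  | .ex v φ => .ex v φ.flatten
  | .all v φ => .all v φ.flatten
  | φ => φ

/-- Negation normal form of the negation of a (first-order) formula. -/
def TForm.neg {σ : Type} {ar : σ → ℕ} {δ : Type} {dar : δ → ℕ} :
    TForm σ ar δ dar → TForm σ ar δ dar
  | .rel r ts => .nrel r ts
  | .nrel r ts => .rel r ts
  | .eq k x y => .neq k x y
  | .neq k x y => .eq k x y
  | .dep d xs => .dep d xs
  | .and φ ψ => .or φ.neg ψ.neg
  | .or φ ψ => .and φ.neg ψ.neg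
  | .ex v φ => .all v φ.neg
  | .all v φ => .ex v φ.neg

/-- `(ψ ↾ θ) := (¬θ) ∨ (θ ∧ ψ)`. -/
def TForm.restrict {σ : Type} {ar : σ → ℕ} {δ : Type} {dar : δ → ℕ}
    (ψ θ : TForm σ ar δ dar) : TForm σ ar δ dar :=
  .or θ.neg (.and θ ψ)

/-- A family of dependencies is upwards closed. -/
def UpClosed {δ : Type} {dar : δ → ℕ} (DI : DepFam δ dar) : Prop :=
  ∀ (d : δ) (M : Type) (R S : Set (Fin (dar d) → M)), R ⊆ S → DI d M R → DI d M S

/-- The constancy dependency of arity `n`. -/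
def ConstD (n : ℕ) : ∀ M : Type, Set (Fin n → M) → Prop :=
  fun _ R => ∀ t ∈ R, ∀ t' ∈ R, t = t'

/-!
Induct on `φ`, generalizing the tuple `x̄` and both teams, to show that satisfaction passes from
`X` to `Y` whenever `X(x̄) = Y(x̄)`. Literals and dependency atoms only see the values of
assignments on `x̄`. A split `X = A ∪ B` is pulled back to `Y` along `s ↦ s(x̄)`. At a quantifier
over `v` the tuple is extended by `v`; for `∃ v`, each `s' ∈ Y` receives all the witnesses of the
`s ∈ X` that agree with `s'` on `x̄`, which is possible because lax semantics picks sets of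
witnesses.
-/

open Set Function

theorem comp_eq_comp_of_range_subset {α β ι κ : Type*} {f : ι → α} {g : κ → α}
    (hgf : range g ⊆ range f) {s s' : α → β} (h : s ∘ f = s' ∘ f) : s ∘ g = s' ∘ g := by
  obtain ⟨c, rfl⟩ := range_subset_range_iff_exists_comp.1 hgf
  exact congrArg (· ∘ c) h

theorem update_comp_snoc_eq_of_comp_eq {α β : Type*} [DecidableEq α] {k : ℕ} {f : Fin k → α}
    {s s' : α → β} (h : s ∘ f = s' ∘ f) (a : α) (b : β) :
    update s a b ∘ (Fin.snoc f a : Fin (k + 1) → α) =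
      update s' a b ∘ (Fin.snoc f a : Fin (k + 1) → α) := by
  rw [← eqOn_range, Fin.range_snoc]
  rintro u (rfl | ⟨j, rfl⟩)
  · simp
  · by_cases hj : f j = a
    · simp [hj]
    · simp only [update_of_ne hj]
      exact congrFun h j

theorem subset_range_snoc_of_diff_subset {α : Type*} {k : ℕ} {f : Fin k → α} {a : α}
    {S : Set α} (h : S \ {a} ⊆ range f) : S ⊆ range (Fin.snoc f a : Fin (k + 1) → α) := by
  rwa [Fin.range_snoc, insert_eq, ← sdiff_subset_iff]

namespace Team

variable {M : Type}

theorem rel_eq_image (X : Team M) {k : ℕ} (xs : Fin k → ℕ) :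
    X.rel xs = (· ∘ xs) '' X := by
  ext t
  exact ⟨fun ⟨s, hs, h⟩ => ⟨s, hs, h.symm⟩, fun ⟨s, hs, h⟩ => ⟨s, hs, h.symm⟩⟩

theorem exists_comp_eq_of_rel_eq {k : ℕ} {xb : Fin k → ℕ} {X Y : Team M}
    (hXY : X.rel xb = Y.rel xb) {s : ℕ → M} (hs : s ∈ X) : ∃ s' ∈ Y, s ∘ xb = s' ∘ xb := by
  obtain ⟨s', hs', h⟩ : s ∘ xb ∈ Y.rel xb := hXY ▸ ⟨s, hs, rfl⟩
  exact ⟨s', hs', h⟩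

theorem forall_mem_of_rel_eq {k : ℕ} {xb : Fin k → ℕ} {X Y : Team M}
    (hXY : X.rel xb = Y.rel xb) {P : (ℕ → M) → Prop}
    (hP : ∀ s s', s ∘ xb = s' ∘ xb → P s → P s') (hX : ∀ s ∈ X, P s) : ∀ s ∈ Y, P s := by
  intro s hs
  obtain ⟨s', hs', h⟩ := exists_comp_eq_of_rel_eq hXY.symm hs
  exact hP s' s h.symm (hX s' hs')

theorem rel_eq_of_range_subset {k n : ℕ} {xb : Fin k → ℕ} {xs : Fin n → ℕ}
    (hxs : range xs ⊆ range xb) {X Y : Team M} (hXY : X.rel xb = Y.rel xb) :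
    X.rel xs = Y.rel xs := by
  obtain ⟨c, rfl⟩ := range_subset_range_iff_exists_comp.1 hxs
  simp only [rel_eq_image] at hXY ⊢
  have : (fun s : ℕ → M => s ∘ (xb ∘ c)) = (· ∘ c) ∘ (· ∘ xb) := rfl
  rw [this, image_comp, image_comp, hXY]

theorem exists_union_rel_eq {k : ℕ} {xb : Fin k → ℕ} {A B Y : Team M}
    (hY : (A ∪ B).rel xb = Y.rel xb) :
    ∃ A' B', Y = A' ∪ B' ∧ A.rel xb = A'.rel xb ∧ B.rel xb = B'.rel xb := by
  simp only [rel_eq_image] at hY ⊢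
  have key : ∀ C ⊆ A ∪ B, (· ∘ xb) '' C = (· ∘ xb) '' (Y ∩ (· ∘ xb) ⁻¹' ((· ∘ xb) '' C)) := by
    intro C hC
    rw [image_inter_preimage, ← hY, inter_eq_right.2 (image_mono hC)]
  refine ⟨_, _, ?_, key A subset_union_left, key B subset_union_right⟩
  rw [← inter_union_distrib_left, ← preimage_union, ← image_union, hY]
  exact (inter_eq_left.2 (subset_preimage_image _ Y)).symm

/-- The team `X[H/v]` of the lax semantics of `∃ v`. -/
def supplement (X : Team M) (v : ℕ) (H : (ℕ → M) → Set M) : Team M :=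
  {s' | ∃ s ∈ X, ∃ m ∈ H s, s' = update s v m}

theorem rel_supplement_subset {k : ℕ} {xb : Fin k → ℕ} {X Y : Team M} {v : ℕ}
    {H H' : (ℕ → M) → Set M}
    (h : ∀ s ∈ X, ∀ m ∈ H s, ∃ s' ∈ Y, s ∘ xb = s' ∘ xb ∧ m ∈ H' s') :
    (X.supplement v H).rel (Fin.snoc xb v) ⊆ (Y.supplement v H').rel (Fin.snoc xb v) := by
  rintro _ ⟨_, ⟨s, hs, m, hm, rfl⟩, rfl⟩
  obtain ⟨s', hs', hss', hm'⟩ := h s hs m hm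
  exact ⟨_, ⟨s', hs', m, hm', rfl⟩, update_comp_snoc_eq_of_comp_eq hss' v m⟩

theorem rel_supplement_univ_subset {k : ℕ} {xb : Fin k → ℕ} {X Y : Team M}
    (hXY : X.rel xb = Y.rel xb) (v : ℕ) :
    (X.supplement v fun _ => univ).rel (Fin.snoc xb v) ⊆
      (Y.supplement v fun _ => univ).rel (Fin.snoc xb v) :=
  rel_supplement_subset fun _ hs _ _ =>
    let ⟨s', hs', h⟩ := exists_comp_eq_of_rel_eq hXY hs
    ⟨s', hs', h, trivial⟩

theorem exists_supplement_rel_eq {k : ℕ} {xb : Fin k → ℕ} {X Y : Team M}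
    (hXY : X.rel xb = Y.rel xb) (v : ℕ) {H : (ℕ → M) → Set M} (hH : ∀ s ∈ X, (H s).Nonempty) :
    ∃ H' : (ℕ → M) → Set M, (∀ s' ∈ Y, (H' s').Nonempty) ∧
      (X.supplement v H).rel (Fin.snoc xb v) = (Y.supplement v H').rel (Fin.snoc xb v) := by
  refine ⟨fun s' => {m | ∃ s ∈ X, s ∘ xb = s' ∘ xb ∧ m ∈ H s}, fun s' hs' => ?_, ?_⟩
  · obtain ⟨s, hs, h⟩ := exists_comp_eq_of_rel_eq hXY.symm hs'
    obtain ⟨m, hm⟩ := hH s hs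
    exact ⟨m, s, hs, h.symm, hm⟩
  · refine (rel_supplement_subset fun s hs m hm => ?_).antisymm
      (rel_supplement_subset fun _ _ m ⟨s, hs, h, hm⟩ => ⟨s, hs, h.symm, hm⟩)
    obtain ⟨s', hs', h⟩ := exists_comp_eq_of_rel_eq hXY hs
    exact ⟨s', hs', h, s, hs, h, hm⟩

end Team

section Locality

variable {σ : Type} {ar : σ → ℕ} {δ : Type} {dar : δ → ℕ} {M : Type}
  (RI : ∀ r : σ, Set (Fin (ar r) → M)) (DI : DepFam δ dar)

theorem tsat_all_iff (v : ℕ) (φ : TForm σ ar δ dar) (X : Team M) :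
    tsat RI DI (.all v φ) X ↔ tsat RI DI φ (X.supplement v fun _ => univ) := by
  simp [tsat, Team.supplement]

theorem tsat_of_rel_eq (φ : TForm σ ar δ dar) {k : ℕ} (xb : Fin k → ℕ)
    (hfree : φ.free ⊆ range xb) {X Y : Team M} (hXY : X.rel xb = Y.rel xb)
    (hX : tsat RI DI φ X) : tsat RI DI φ Y := by
  induction φ generalizing k X Y with
  | rel r ts =>
    exact Team.forall_mem_of_rel_eq hXY (P := fun s => s ∘ ts ∈ RI r)
      (fun s s' h hs => comp_eq_comp_of_range_subset hfree h ▸ hs) hX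
  | nrel r ts =>
    exact Team.forall_mem_of_rel_eq hXY (P := fun s => s ∘ ts ∉ RI r)
      (fun s s' h hs => comp_eq_comp_of_range_subset hfree h ▸ hs) hX
  | eq n x y =>
    obtain ⟨hx, hy⟩ := union_subset_iff.1 hfree
    exact Team.forall_mem_of_rel_eq hXY (P := fun s => s ∘ x = s ∘ y) (fun s s' h hs => by
      rwa [← comp_eq_comp_of_range_subset hx h, ← comp_eq_comp_of_range_subset hy h]) hX
  | neq n x y =>
    obtain ⟨hx, hy⟩ := union_subset_iff.1 hfree
    exact Team.forall_mem_of_rel_eq hXY (P := fun s => s ∘ x ≠ s ∘ y) (fun s s' h hs => by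
      rwa [← comp_eq_comp_of_range_subset hx h, ← comp_eq_comp_of_range_subset hy h]) hX
  | dep d xs => exact (Team.rel_eq_of_range_subset hfree hXY ▸ hX : DI d M (Y.rel xs))
  | and φ ψ ihφ ihψ =>
    obtain ⟨hφ, hψ⟩ := union_subset_iff.1 hfree
    exact ⟨ihφ xb hφ hXY hX.1, ihψ xb hψ hXY hX.2⟩
  | or φ ψ ihφ ihψ =>
    obtain ⟨hφ, hψ⟩ := union_subset_iff.1 hfree
    obtain ⟨A, B, rfl, hA, hB⟩ := hX
    obtain ⟨A', B', rfl, hAA', hBB'⟩ := Team.exists_union_rel_eq hXY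
    exact ⟨A', B', rfl, ihφ xb hφ hAA' hA, ihψ xb hψ hBB' hB⟩
  | ex v φ ih =>
    obtain ⟨H, hH, hsat⟩ := hX
    obtain ⟨H', hH', hrel⟩ := Team.exists_supplement_rel_eq hXY v hH
    exact ⟨H', hH', ih (Fin.snoc xb v) (subset_range_snoc_of_diff_subset hfree) hrel hsat⟩
  | all v φ ih =>
    rw [tsat_all_iff] at hX ⊢
    exact ih (Fin.snoc xb v) (subset_range_snoc_of_diff_subset hfree)
      ((Team.rel_supplement_univ_subset hXY v).antisymm
        (Team.rel_supplement_univ_subset hXY.symm v)) hX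

end Locality

theorem locality {σ : Type} {ar : σ → ℕ} {δ : Type} {dar : δ → ℕ} {M : Type}
    (RI : ∀ r : σ, Set (Fin (ar r) → M)) (DI : DepFam δ dar)
    {k : ℕ} (xb : Fin k → ℕ) (φ : TForm σ ar δ dar) (hfree : φ.free ⊆ Set.range xb)
    (X Y : Team M) (hXY : X.rel xb = Y.rel xb) :
    tsat RI DI φ X ↔ tsat RI DI φ Y :=
  ⟨tsat_of_rel_eq RI DI φ xb hfree hXY, tsat_of_rel_eq RI DI φ xb hfree hXY.symm⟩
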